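/- arXiv:2402.14486 — 8 statements merged into one kernel-verified Lean document; each statement's English description precedes it below -/
import Mathlib

section
/- Let G : [0,1] → ℝ be a non-decreasing convex function, and let z_{-M-1} = 0 ≤ z_{-M} ≤ z_{-M+1} ≤ ... ≤ z_M ≤ z_{M+1} = 1 be points such that for each i with −M ≤ i ≤ M, g_i is a subgradient of G at z_i, where g_i is non-decreasing in i. Define the piecewise-linear function Ĝ with Ĝ(z_{-M-1}) = Ĝ(z_{-M}) = G(0) = 0, Ĝ(z_{i+1}) = Ĝ(z_i) + g_i·(z_{i+1} − z_i), extended by linear interpolation between consecutive z_i's. Then (1) Ĝ(x) ≤ G(x) for all x ∈ [0,1], and (2) the function x ↦ G(x) − Ĝ(x) is non-decreasing on [0,1]. -/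
/-!
On `[z i, z (i+1)]` the envelope has slope `g i`, while by convexity `G` rises at least with
slope `g i` to the right of `z i`, where `g i` is a subgradient; on the first segment the
envelope is `0` and `G` is non-decreasing. So `G - Ĝ` is non-decreasing on every segment, hence
on their union `[0, 1]`, and it vanishes at `0`.
-/

open Set

theorem MonotoneOn.Icc_of_forall_Icc_add_one {α β : Type*} [LinearOrder α] [Preorder β]
    {f : α → β} {z : ℤ → α} {a b : ℤ} (hab : a ≤ b) (hz : MonotoneOn z (Icc a b))
    (hf : ∀ k, a ≤ k → k < b → MonotoneOn f (Icc (z k) (z (k + 1)))) :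
    MonotoneOn f (Icc (z a) (z b)) := by
  induction b, hab using Int.leInduction with
  | base => rw [Icc_self]; exact subsingleton_singleton.monotoneOn f
  | succ k hak ih =>
    have hzk : z a ≤ z k := hz ⟨le_rfl, by omega⟩ ⟨hak, by omega⟩ hak
    have hzk' : z k ≤ z (k + 1) := hz ⟨hak, by omega⟩ ⟨by omega, le_rfl⟩ (by omega)
    rw [← Icc_union_Icc_eq_Icc hzk hzk']
    have hleft := ih (hz.mono (Icc_subset_Icc_right (by omega))) fun i hi hik => hf i hi (by omega)
    exact hleft.union_right (hf k hak (by omega)) (isGreatest_Icc hzk) (isLeast_Icc hzk')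

theorem ConvexOn.monotoneOn_sub_mul_of_le {s : Set ℝ} {f : ℝ → ℝ} (hf : ConvexOn ℝ s f)
    {c g : ℝ} (hc : c ∈ s) (hg : ∀ x ∈ s, f c + g * (x - c) ≤ f x) :
    MonotoneOn (fun x => f x - g * x) (s ∩ Ici c) := by
  rintro x ⟨hx, hcx : c ≤ x⟩ y ⟨hy, -⟩ hxy
  dsimp only
  rcases hcx.eq_or_lt with rfl | hcx
  · linarith [hg y hy]
  rcases hxy.eq_or_lt with rfl | hxy
  · rfl
  have hslope : g ≤ (f x - f c) / (x - c) := by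
    rw [le_div_iff₀ (sub_pos.2 hcx)]; linarith [hg x hx]
  have := (le_div_iff₀ (sub_pos.2 hxy)).1 (hslope.trans (hf.slope_mono_adjacent hc hy hcx hxy))
  linarith

theorem piecewise_linear_lower_envelope_general (M : ℕ) (G Ghat : ℝ → ℝ) (z g : ℤ → ℝ)
    (hG0 : G 0 = 0)
    (hGmono : MonotoneOn G (Set.Icc (0 : ℝ) 1))
    (hGconv : ConvexOn ℝ (Set.Icc (0 : ℝ) 1) G)
    -- breakpoints
    (hzfirst : z (-(M : ℤ) - 1) = 0) (hzlast : z ((M : ℤ) + 1) = 1)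
    (hzmono : ∀ i j : ℤ, -(M : ℤ) - 1 ≤ i → i ≤ j → j ≤ (M : ℤ) + 1 → z i ≤ z j)
    -- g i is a subgradient of G at z i, for -M ≤ i ≤ M
    (hsub : ∀ i : ℤ, -(M : ℤ) ≤ i → i ≤ (M : ℤ) →
      ∀ x ∈ Set.Icc (0 : ℝ) 1, G (z i) + g i * (x - z i) ≤ G x)
    -- Ghat is 0 on the first segment, slope g i on [z i, z (i+1)]
    (hGhat0 : ∀ x ∈ Set.Icc (z (-(M : ℤ) - 1)) (z (-(M : ℤ))), Ghat x = 0)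
    (hGhatseg : ∀ i : ℤ, -(M : ℤ) ≤ i → i ≤ (M : ℤ) →
      ∀ x ∈ Set.Icc (z i) (z (i + 1)), Ghat x = Ghat (z i) + g i * (x - z i)) :
    (∀ x ∈ Set.Icc (0 : ℝ) 1, Ghat x ≤ G x) ∧
      (∀ x ∈ Set.Icc (0 : ℝ) 1, ∀ y ∈ Set.Icc (0 : ℝ) 1, x ≤ y →
        G x - Ghat x ≤ G y - Ghat y) := by
  have hz : MonotoneOn z (Icc (-(M : ℤ) - 1) (M + 1)) := fun i hi j hj hij =>
    hzmono i j hi.1 hij hj.2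
  have hseg_subset :
      ∀ i, -(M : ℤ) - 1 ≤ i → i ≤ M → Icc (z i) (z (i + 1)) ⊆ Icc 0 1 := by
    intro i hi hiM
    rw [← hzfirst, ← hzlast]
    exact Icc_subset_Icc (hzmono _ _ le_rfl hi (by omega))
      (hzmono _ _ (by omega) (by omega) le_rfl)
  have hD : MonotoneOn (fun x => G x - Ghat x) (Icc 0 1) := by
    rw [← hzfirst, ← hzlast]
    refine hz.Icc_of_forall_Icc_add_one (by omega) fun i hi hiM' => ?_
    have hiM : i ≤ M := by omega
    obtain rfl | hi := hi.eq_or_lt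
    · refine (hGmono.mono (hseg_subset _ le_rfl hiM)).congr fun x hx => ?_
      rw [sub_add_cancel] at hx
      simp [hGhat0 x hx]
    · have hi : -(M : ℤ) ≤ i := by omega
      have hsub01 := hseg_subset i (by omega) hiM
      have hlin := hGconv.monotoneOn_sub_mul_of_le
        (hsub01 ⟨le_rfl, hzmono i (i + 1) (by omega) (by omega) (by omega)⟩) (hsub i hi hiM)
      intro x hx y hy hxy
      have := hlin ⟨hsub01 hx, hx.1⟩ ⟨hsub01 hy, hy.1⟩ hxy
      simp only [hGhatseg i hi hiM x hx, hGhatseg i hi hiM y hy]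
      linarith
  have hGhat_zero : Ghat 0 = 0 :=
    hGhat0 0 ⟨hzfirst.le, hzfirst ▸ hzmono _ _ le_rfl (by omega) (by omega)⟩
  refine ⟨fun x hx => ?_, fun x hx y hy hxy => hD hx hy hxy⟩
  have := hD ⟨le_rfl, zero_le_one⟩ hx hx.1
  simp only [hG0, hGhat_zero, sub_zero] at this
  linarith

/-- The piecewise-linear function `Ghat` built from subgradients of a
non-decreasing convex function `G` at points `z i` is (1) a pointwise lower bound for
`G` on `[0,1]`, and (2) the difference `G − Ghat` is non-decreasing on `[0,1]`. -/
theorem piecewise_linear_lower_envelope (M : ℕ) (G Ghat : ℝ → ℝ) (z g : ℤ → ℝ)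
    (hG0 : G 0 = 0)
    (hGmono : MonotoneOn G (Set.Icc (0 : ℝ) 1))
    (hGconv : ConvexOn ℝ (Set.Icc (0 : ℝ) 1) G)
    -- breakpoints
    (hzfirst : z (-(M : ℤ) - 1) = 0) (hzlast : z ((M : ℤ) + 1) = 1)
    (hzmono : ∀ i j : ℤ, -(M : ℤ) - 1 ≤ i → i ≤ j → j ≤ (M : ℤ) + 1 → z i ≤ z j)
    -- g i is a subgradient of G at z i, for -M ≤ i ≤ M
    (hsub : ∀ i : ℤ, -(M : ℤ) ≤ i → i ≤ (M : ℤ) →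
      ∀ x ∈ Set.Icc (0 : ℝ) 1, G (z i) + g i * (x - z i) ≤ G x)
    (hgmono : ∀ i j : ℤ, -(M : ℤ) ≤ i → i ≤ j → j ≤ (M : ℤ) → g i ≤ g j)
    (hgnonneg : 0 ≤ g (-(M : ℤ)))
    -- Ghat is 0 on the first segment, slope g i on [z i, z (i+1)]
    (hGhat0 : ∀ x ∈ Set.Icc (z (-(M : ℤ) - 1)) (z (-(M : ℤ))), Ghat x = 0)
    (hGhatseg : ∀ i : ℤ, -(M : ℤ) ≤ i → i ≤ (M : ℤ) →
      ∀ x ∈ Set.Icc (z i) (z (i + 1)), Ghat x = Ghat (z i) + g i * (x - z i)) :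
    (∀ x ∈ Set.Icc (0 : ℝ) 1, Ghat x ≤ G x) ∧
      (∀ x ∈ Set.Icc (0 : ℝ) 1, ∀ y ∈ Set.Icc (0 : ℝ) 1, x ≤ y →
        G x - Ghat x ≤ G y - Ghat y) :=
  piecewise_linear_lower_envelope_general M G Ghat z g hG0 hGmono hGconv hzfirst hzlast hzmono hsub
    hGhat0 hGhatseg
end

section
/- Let G : [0,s] → [0,1] be non-decreasing and convex with G(0)=0, and suppose Ĝ : [0,s] → ℝ is piecewise linear with breakpoints z_{-M} ≤ ... ≤ z_M, where on [z_i, z_{i+1}] the slope of Ĝ equals e^{iε/4} and on [z_i, z_{i+1}] every subgradient of G is at most e^{(i+1)ε/4}, and additionally G(z_{-M}) ≤ ε/4 and Ĝ(z_{-M}) = 0, where e^{-Mε/4} = ε/4. Then G(z_M) − Ĝ(z_M) ≤ ε/2. -/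
/-- Slope-error accumulation bound for the piecewise-linear approximation
with slopes `e^{iε/4}`: if `G` is non-decreasing and convex on `[0,s]` with `G(0)=0`,
`G ≤ 1`, on each `[z i, z (i+1)]` every subgradient of `G` is at most `e^{(i+1)ε/4}`,
`G(z_{-M}) ≤ ε/4` and `Ghat(z_{-M}) = 0`, then `G(z_M) − Ghat(z_M) ≤ ε/2`. -/
theorem slope_error_accumulation (ε s : ℝ) (hε : ε ∈ Set.Ioo (0 : ℝ) (1 / 2))
    (hs : s ∈ Set.Ioc (0 : ℝ) 1)
    (M : ℕ) (hM : Real.exp (-(M : ℝ) * ε / 4) = ε / 4)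
    (G : ℝ → ℝ) (z : ℤ → ℝ) (Ghat : ℤ → ℝ) -- Ghat i = value of Ĝ at z i
    (hG0 : G 0 = 0)
    (hGmono : MonotoneOn G (Set.Icc 0 s))
    (hGconv : ConvexOn ℝ (Set.Icc 0 s) G)
    (hGle1 : ∀ x ∈ Set.Icc 0 s, G x ≤ 1)
    (hz0 : 0 ≤ z (-(M : ℤ))) (hzs : z (M : ℤ) ≤ s)
    (hzmono : ∀ i j : ℤ, -(M : ℤ) ≤ i → i ≤ j → j ≤ (M : ℤ) → z i ≤ z j)
    -- every subgradient of G on [z i, z (i+1)] is at most e^{(i+1)ε/4}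
    (hslope : ∀ i : ℤ, -(M : ℤ) ≤ i → i < (M : ℤ) →
      ∀ x ∈ Set.Icc (z i) (z (i + 1)), ∀ y ∈ Set.Icc (z i) (z (i + 1)), x ≤ y →
        G y - G x ≤ Real.exp (((i : ℝ) + 1) * ε / 4) * (y - x))
    (hGzfirst : G (z (-(M : ℤ))) ≤ ε / 4)
    (hGhatfirst : Ghat (-(M : ℤ)) = 0)
    -- Ĝ has slope e^{iε/4} on [z i, z (i+1)]
    (hGhatrec : ∀ i : ℤ, -(M : ℤ) ≤ i → i < (M : ℤ) →
      Ghat (i + 1) = Ghat i + Real.exp ((i : ℝ) * ε / 4) * (z (i + 1) - z i)) :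
    G (z (M : ℤ)) - Ghat (M : ℤ) ≤ ε / 2 := by
  have hε0 : 0 < ε := hε.1
  have hexp : (0:ℝ) < Real.exp (-(ε/4)) := Real.exp_pos _
  -- key induction
  have key : ∀ n : ℕ, (n : ℤ) ≤ 2 * M →
      Real.exp (-(ε/4)) * (G (z (-(M:ℤ) + n)) - G (z (-(M:ℤ)))) ≤ Ghat (-(M:ℤ) + n) := by
    intro n
    induction n with
    | zero => intro _; simp [hGhatfirst]
    | succ n ih =>
      intro hn
      have hn' : (n : ℤ) ≤ 2 * M := by push_cast at hn ⊢; omega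
      have hi1 : -(M:ℤ) ≤ -(M:ℤ) + n := by omega
      have hi2 : -(M:ℤ) + n < (M:ℤ) := by push_cast at hn; omega
      have hzle : z (-(M:ℤ) + n) ≤ z (-(M:ℤ) + n + 1) :=
        hzmono _ _ hi1 (by omega) (by omega)
      have hsl := hslope (-(M:ℤ) + n) hi1 hi2 (z (-(M:ℤ) + n))
        ⟨le_refl _, hzle⟩ (z (-(M:ℤ) + n + 1)) ⟨hzle, le_refl _⟩ hzle
      have hrec := hGhatrec (-(M:ℤ) + n) hi1 hi2
      have hid : Real.exp (((-(M:ℤ) + n : ℤ) : ℝ) * ε / 4) =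
          Real.exp (-(ε/4)) * Real.exp ((((-(M:ℤ) + n : ℤ) : ℝ) + 1) * ε / 4) := by
        rw [← Real.exp_add]; ring_nf
      have step : Real.exp (-(ε/4)) * (G (z (-(M:ℤ) + n + 1)) - G (z (-(M:ℤ) + n))) ≤
          Real.exp (((-(M:ℤ) + n : ℤ) : ℝ) * ε / 4) * (z (-(M:ℤ) + n + 1) - z (-(M:ℤ) + n)) := by
        rw [hid, mul_assoc]
        exact mul_le_mul_of_nonneg_left hsl hexp.le
      have := ih hn'
      have hcast : -(M:ℤ) + (n + 1 : ℕ) = -(M:ℤ) + n + 1 := by push_cast; ring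
      rw [hcast]
      rw [hrec]
      nlinarith [step, this]
  have hkey := key (2 * M) (by push_cast; ring_nf; omega)
  have hcast2 : -(M:ℤ) + ((2 * M : ℕ) : ℤ) = (M:ℤ) := by push_cast; ring
  rw [hcast2] at hkey
  -- bounds on G values
  have hz0' : 0 ≤ z (M:ℤ) := le_trans hz0 (hzmono _ _ (by omega) (by omega) le_rfl)
  have hzsM : z (-(M:ℤ)) ≤ s := le_trans (hzmono _ _ (by omega) (by omega) le_rfl) hzs
  have hmemM : z (M:ℤ) ∈ Set.Icc (0:ℝ) s := ⟨hz0', hzs⟩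
  have hmem0 : z (-(M:ℤ)) ∈ Set.Icc (0:ℝ) s := ⟨hz0, hzsM⟩
  have hGM1 : G (z (M:ℤ)) ≤ 1 := hGle1 _ hmemM
  have hGfirst0 : 0 ≤ G (z (-(M:ℤ))) := by
    have := hGmono ⟨le_refl 0, hs.1.le⟩ hmem0 hz0
    rwa [hG0] at this
  have hexple : 1 - ε/4 ≤ Real.exp (-(ε/4)) := by
    have := Real.add_one_le_exp (-(ε/4)); linarith
  have hexp1 : Real.exp (-(ε/4)) ≤ 1 := Real.exp_le_one_iff.mpr (by linarith)
  nlinarith [hkey, hGM1, hGfirst0, hGzfirst, hexple, hexp1,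
    mul_nonneg hexp.le hGfirst0]
end

section
/- Let G : [0,1] → [0,1] be non-decreasing and convex with G(0) = 0, and let F = G^{-1} be its (non-decreasing concave) inverse. Suppose G̃ : [0,1] → [0,1] is non-decreasing with G̃ ≤ G pointwise and G − G̃ ≤ ε²/2 on an interval [0, z*] where G has a subgradient at least ε at every point x with G(x) ≥ ε. Then for F̃ = G̃^{-1}: for every y ∈ [ε, G(z*)], we have F(y) ≤ F̃(y) ≤ F(y) + ε/2. -/
/-- If `G̃ ≤ G` with `G − G̃ ≤ ε²/2` on `[0, z*]`, and `G` has a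
subgradient of size at least `ε` at every point where `G ≥ ε`, then the inverses
satisfy `F(y) ≤ F̃(y) ≤ F(y) + ε/2` for every `y ∈ [ε, G(z*)]`. -/
theorem inverse_approximation (ε zstar : ℝ) (hε : ε ∈ Set.Ioo (0 : ℝ) (1 / 2))
    (hzstar : zstar ∈ Set.Icc (0 : ℝ) 1)
    (G Gt F Ft : ℝ → ℝ)
    (hG0 : G 0 = 0)
    (hGmono : MonotoneOn G (Set.Icc (0 : ℝ) 1))
    (hGconv : ConvexOn ℝ (Set.Icc (0 : ℝ) 1) G)
    (hGtmono : MonotoneOn Gt (Set.Icc (0 : ℝ) 1))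
    (hGtle : ∀ x ∈ Set.Icc (0 : ℝ) 1, Gt x ≤ G x)
    (hclose : ∀ x ∈ Set.Icc 0 zstar, G x - Gt x ≤ ε ^ 2 / 2)
    -- subgradient at least ε wherever G x ≥ ε
    (hsubgrad : ∀ x ∈ Set.Icc 0 zstar, ε ≤ G x →
      ∃ g, ε ≤ g ∧ ∀ y ∈ Set.Icc (0 : ℝ) 1, G x + g * (y - x) ≤ G y)
    -- F and Ft are inverses of G and Gt on the relevant range
    (hF : ∀ y ∈ Set.Icc ε (G zstar), F y ∈ Set.Icc 0 zstar ∧ G (F y) = y)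
    (hFt : ∀ y ∈ Set.Icc ε (G zstar), Ft y ∈ Set.Icc 0 zstar ∧ Gt (Ft y) = y) :
    ∀ y ∈ Set.Icc ε (G zstar), F y ≤ Ft y ∧ Ft y ≤ F y + ε / 2 := by
  intro y hy
  obtain ⟨hx, hGx⟩ := hF y hy
  obtain ⟨hxt, hGtxt⟩ := hFt y hy
  have hsub : Set.Icc (0:ℝ) zstar ⊆ Set.Icc 0 1 := Set.Icc_subset_Icc le_rfl hzstar.2
  have hx1 := hsub hx
  have hxt1 := hsub hxt
  have hyε : ε ≤ y := hy.1
  have hGxt_ge : y ≤ G (Ft y) := hGtxt.symm.trans_le (hGtle _ hxt1)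
  obtain ⟨g1, hg1, hsg1⟩ := hsubgrad (Ft y) hxt (le_trans hyε hGxt_ge)
  have h1 := hsg1 (F y) hx1
  have hle : F y ≤ Ft y := by nlinarith [hε.1]
  obtain ⟨g2, hg2, hsg2⟩ := hsubgrad (F y) hx (by rw [hGx]; exact hyε)
  have h2 := hsg2 (Ft y) hxt1
  have hcl := hclose (Ft y) hxt
  refine ⟨hle, ?_⟩
  nlinarith [hε.1]
end

section
/- In the multiplicative-hardness instance with parameter ε ∈ (0, 1/4) and bound H ≥ 1, every H-bounded contract yields principal's expected utility strictly less than 3ε. Consequently, for any α > 1, choosing ε < e^{−3α} gives OPT_H < OPT/α since OPT ≥ ε(1 + ln(1/ε)) > 3αε > α·OPT_H. -/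
/-!
Write `g t = exp t - 1 - t` and `k = ε² (p₂ - p₁) / (2H)`, so `|k| ≤ ε² / 2`, and note that
`ε exp a ≤ 1` on the action space. The agent maximises `(ε - k) t - (ε (1 - p₁) - k) exp t`
up to a constant. If `ε (1 - p₁) ≤ k` then `1 - p₁ ≤ ε / 2` and the principal's main term
`ε exp a (1 - p₁)` is at most `ε / 2`. Otherwise the objective is strictly concave with
unconstrained maximiser `exp t₀ = (ε - k) / (ε (1 - p₁) - k)`, so the best response satisfies
`(ε (1 - p₁) - k) exp a ≤ ε - k`, which bounds the main term by `3ε / 2 + ε² / 2`.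
The remaining term `-k g(a)` is at most `ε / 2`.
-/

open Real Set

theorem mul_exp_le_of_isMaxOn {b c L a : ℝ} (hb : 0 < b) (hbc : b ≤ c) (ha : a ∈ Icc 0 L)
    (hmax : IsMaxOn (fun t => c * t - b * exp t) (Icc 0 L) a) : b * exp a ≤ c := by
  by_contra! hlt
  -- `s` is the unconstrained maximiser, and by strict concavity the only one
  set s := log (c / b)
  have hc : 0 < c := hb.trans_le hbc
  have hs : b * exp s = c := by
    rw [exp_log (div_pos hc hb)]
    field_simp
  have hs0 : 0 ≤ s := log_nonneg ((one_le_div hb).mpr hbc)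
  have hsa : s < a := exp_lt_exp.mp (lt_of_mul_lt_mul_left (hs.trans_lt hlt) hb.le)
  have hle : c * s - b * exp s ≤ c * a - b * exp a := hmax ⟨hs0, hsa.le.trans ha.2⟩
  have htangent : (a - s) + 1 < exp (a - s) := add_one_lt_exp (sub_ne_zero.mpr hsa.ne')
  have hexp : exp a = exp s * exp (a - s) := by rw [← exp_add, add_sub_cancel]
  nlinarith [mul_lt_mul_of_pos_left htangent hc]

theorem mul_exp_mul_one_sub_le_of_isMaxOn {ε k p₁ a L : ℝ} (hε : 0 < ε) (hp₁ : 0 ≤ p₁) (hk : |k| ≤ ε ^ 2 / 2)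
    (hexp : ε * exp a ≤ 1) (ha : a ∈ Icc 0 L)
    (hmax : IsMaxOn (fun t => (ε - k) * t - (ε * (1 - p₁) - k) * exp t) (Icc 0 L) a) :
    ε * exp a * (1 - p₁) ≤ 3 / 2 * ε + ε ^ 2 / 2 := by
  obtain ⟨hk₁, hk₂⟩ := abs_le.mp hk
  have hexp_pos := exp_pos a
  rcases le_or_gt (ε * (1 - p₁)) k with hconvex | hconcave
  · nlinarith [mul_le_mul_of_nonneg_left hconvex hexp_pos.le]
  · have hbr := mul_exp_le_of_isMaxOn (sub_pos.mpr hconcave) (by nlinarith) ha hmax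
    nlinarith [mul_le_mul_of_nonneg_right hk₂ hexp_pos.le, mul_le_mul_of_nonneg_right hk₁ hexp_pos.le]

theorem neg_mul_exp_sub_one_sub_le {ε k a : ℝ} (hε : 0 ≤ ε) (ha : 0 ≤ a)
    (hk : |k| ≤ ε ^ 2 / 2) (hexp : ε * exp a ≤ 1) : -(k * (exp a - 1 - a)) ≤ ε / 2 := by
  have hg : 0 ≤ exp a - 1 - a := by linarith [add_one_le_exp a]
  calc -(k * (exp a - 1 - a)) ≤ |k| * (exp a - 1 - a) := by
        rw [← neg_mul]
        exact mul_le_mul_of_nonneg_right (neg_le_abs k) hg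
    _ ≤ ε ^ 2 / 2 * exp a := mul_le_mul hk (by linarith) hg (by positivity)
    _ = ε / 2 * (ε * exp a) := by ring
    _ ≤ ε / 2 := mul_le_of_le_one_right (by positivity) hexp

/-- In the multiplicative-hardness instance, every `H`-bounded contract
yields principal's expected utility strictly less than `3ε`; consequently, for any
`α > 1`, choosing `ε < e^{−3α}` gives `3αε < ε(1 + ln(1/ε))` (so `OPT_H < OPT/α`). -/
theorem hardness_multiplicative (ε H : ℝ) (hε : ε ∈ Set.Ioo (0 : ℝ) (1 / 4)) (hH : 1 ≤ H)
    (p₁ p₂ : ℝ) (hp₁ : p₁ ∈ Set.Icc 0 H) (hp₂ : p₂ ∈ Set.Icc 0 H)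
    (a : ℝ) (ha : a ∈ Set.Icc 0 (Real.log (1 / ε)))
    -- a is the agent's best response to the contract (0, p₁, p₂)
    (hbr : ∀ a' ∈ Set.Icc 0 (Real.log (1 / ε)),
      ε * Real.exp a' * p₁
          + (ε ^ 2 / (2 * H)) * (Real.exp a' - 1 - a') * (p₂ - p₁)
          - ε * (Real.exp a' - 1 - a')
        ≤ ε * Real.exp a * p₁
          + (ε ^ 2 / (2 * H)) * (Real.exp a - 1 - a) * (p₂ - p₁)
          - ε * (Real.exp a - 1 - a)) :
    (ε * Real.exp a * (1 - p₁)
        + (ε ^ 2 / (2 * H)) * (Real.exp a - 1 - a) * (p₁ - p₂) < 3 * ε) ∧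
    (∀ α : ℝ, 1 < α → ε < Real.exp (-(3 * α)) →
      α * (3 * ε) < ε * (1 + Real.log (1 / ε))) := by
  obtain ⟨hε0, hε1⟩ := hε
  set k := ε ^ 2 / (2 * H) * (p₂ - p₁)
  have hk : |k| ≤ ε ^ 2 / 2 := by
    have hH0 : 0 < H := by linarith
    calc |k| = ε ^ 2 / (2 * H) * |p₂ - p₁| := by rw [abs_mul, abs_of_pos (by positivity)]
      _ ≤ ε ^ 2 / (2 * H) * H := by
        gcongr
        exact abs_sub_le_of_nonneg_of_le hp₂.1 hp₂.2 hp₁.1 hp₁.2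
      _ = ε ^ 2 / 2 := by field_simp
  have hexp : ε * exp a ≤ 1 := by
    rw [← le_div_iff₀' hε0, ← le_log_iff_exp_le (by positivity)]
    exact ha.2
  have hmax : IsMaxOn (fun t => (ε - k) * t - (ε * (1 - p₁) - k) * exp t)
      (Icc 0 (log (1 / ε))) a := isMaxOn_iff.mpr fun t ht => by
    -- the agent's utility is this objective plus the constant `ε - k`
    have := hbr t ht
    linarith
  have hshare := mul_exp_mul_one_sub_le_of_isMaxOn hε0 hp₁.1 hk hexp ha hmax
  have hbonus := neg_mul_exp_sub_one_sub_le hε0.le ha.1 hk hexp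
  have hsplit : ε ^ 2 / (2 * H) * (exp a - 1 - a) * (p₁ - p₂) = -(k * (exp a - 1 - a)) := by
    ring
  refine ⟨by nlinarith, fun α _ hα => ?_⟩
  have hlog : 3 * α < log (1 / ε) := by
    rw [one_div, log_inv, lt_neg]
    exact (log_lt_iff_lt_exp hε0).mpr hα
  nlinarith
end

section
/- In the additive-hardness instance, any contract with 0 ≤ p_1, p_2 ≤ H that incentivizes action 2 (i.e., makes the agent weakly prefer action 2 over action 1) must pay in expectation at least (1/2)(1−4ε) − ε(1−8ε), so the principal's utility under any such H-bounded contract is at most 1 − (1/2)(1−4ε) + ε(1−8ε). Since any contract incentivizing action 1 yields utility at most 1/2, OPT_H ≤ 1 − (1/2)(1−4ε) + ε(1−8ε), and hence for any β < 1/4 there exists ε > 0 with OPT_H < OPT − β. -/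
/-- In the additive-hardness instance, any `H`-bounded contract that
incentivizes action 2 over action 1 must pay at least `(1/2)(1−4ε) − ε(1−8ε)` in
expectation, so its principal utility is at most `1 − (1/2)(1−4ε) + ε(1−8ε)`.
Moreover, for any `β < 1/4` there is `ε' > 0` making the `H`-bounded optimum
(at most `max(1/2, that bound)`) smaller than `3/4 − β`. -/
theorem hardness_additive (ε H : ℝ) (hε : ε ∈ Set.Ioo (0 : ℝ) (1 / 100)) (hH : 0 < H)
    (p₁ p₂ : ℝ) (hp₁ : p₁ ∈ Set.Icc 0 H) (hp₂ : p₂ ∈ Set.Icc 0 H)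
    -- incentive constraint: agent weakly prefers action 2 over action 1
    (hIC : (1 / 2) * p₁ + (4 * ε ^ 2 / H) * (p₂ - p₁) - ε
        ≤ p₁ + (ε / H) * (p₂ - p₁) - 1 / 4) :
    ((1 / 2) * (1 - 4 * ε) - ε * (1 - 8 * ε) ≤ p₁ + (ε / H) * (p₂ - p₁)) ∧
    (1 - (p₁ + (ε / H) * (p₂ - p₁)) ≤ 1 - (1 / 2) * (1 - 4 * ε) + ε * (1 - 8 * ε)) ∧
    (∀ β : ℝ, β < 1 / 4 → ∃ ε' ∈ Set.Ioo (0 : ℝ) (1 / 100),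
      max (1 / 2) (1 - (1 / 2) * (1 - 4 * ε') + ε' * (1 - 8 * ε')) < 3 / 4 - β) := by
  obtain ⟨hε0, hε1⟩ := hε
  obtain ⟨hp1l, hp1u⟩ := hp₁
  obtain ⟨hp2l, hp2u⟩ := hp₂
  have hΔ : |p₂ - p₁| ≤ H := abs_sub_le_of_nonneg_of_le hp2l hp2u hp1l hp1u
  have key : (1 / 2) * (1 - 4 * ε) - ε * (1 - 8 * ε) ≤ p₁ + (ε / H) * (p₂ - p₁) := by
    have h8 : (0:ℝ) ≤ 1 - 8 * ε := by linarith
    have hεH : 0 ≤ ε * (1 - 8 * ε) / H := div_nonneg (mul_nonneg hε0.le h8) hH.le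
    have hbound : (ε / H) * (1 - 8 * ε) * (p₂ - p₁) ≤ ε * (1 - 8 * ε) := by
      have h1 : (ε / H) * (1 - 8 * ε) * (p₂ - p₁) ≤ (ε / H) * (1 - 8 * ε) * H := by
        apply mul_le_mul_of_nonneg_left (le_trans (le_abs_self _) hΔ)
        have : 0 ≤ ε / H := by positivity
        nlinarith
      have : (ε / H) * (1 - 8 * ε) * H = ε * (1 - 8 * ε) := by
        field_simp
      linarith [this ▸ h1]
    -- from hIC: 1/4 - ε ≤ (1/2) p₁ + (ε/H)(1-4ε) Δ
    have hIC' : 1 / 4 - ε ≤ (1 / 2) * p₁ + (ε / H) * (1 - 4 * ε) * (p₂ - p₁) := by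
      have h4 : (4 * ε ^ 2 / H) = (ε / H) * (4 * ε) := by field_simp
      nlinarith [hIC, h4]
    nlinarith [hIC', hbound]
  refine ⟨key, by linarith, ?_⟩
  intro β hβ
  set δ : ℝ := min ((1 / 4 - β) / 6) (1 / 200) with hδdef
  have hβ' : 0 < 1 / 4 - β := by linarith
  have hδ0 : 0 < δ := lt_min (by linarith) (by norm_num)
  have hδ1 : δ ≤ (1 / 4 - β) / 6 := min_le_left _ _
  have hδ2 : δ ≤ 1 / 200 := min_le_right _ _
  refine ⟨δ, ⟨hδ0, by linarith⟩, ?_⟩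
  have h1 : (1 : ℝ) / 2 < 3 / 4 - β := by linarith
  have h2 : 1 - (1 / 2) * (1 - 4 * δ) + δ * (1 - 8 * δ) < 3 / 4 - β := by nlinarith
  exact max_lt h1 h2
end

section
/- Mixed approximation for linear contracts: Let k = log₂(1/ε) for ε ∈ (0, 1/2). For each i = 1,...,k consider the linear contract with ratio ρ_i = 1 − 2^{−i}, let V_i be the expected principal's value of the agent's best response action and c_i its cost. Then V_k − c_k ≤ 2·log₂(1/ε)·LIN, where LIN = max over linear contract ratios ρ of the principal's utility (1−ρ)·V(ρ). Moreover, if a* maximizes welfare V_a − c_a with c_{a*} ≤ 1, then (V_{a*} − c_{a*}) − (V_k − c_k) ≤ ε/(1−ε) ≤ 2ε. Consequently OPT ≤ max_a (V_a − c_a) ≤ 2(log₂(1/ε)·LIN + ε). -/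
/-!
Incentive compatibility of the best response `b` to the `ρ`-linear contract against any action `a`
says that switching to `a` gains at most `(1 - ρ) (V a - V b)` in welfare. Along the ratios
`ρ_n = 1 - 2⁻ⁿ` the factor `1 - ρ_n` is twice `1 - ρ_{n+1}`, so each step gains at most
`2 (1 - ρ_{n+1}) V_{n+1} ≤ 2 LIN`; starting from `V_1 - c_1 ≤ V_1 ≤ 2 LIN`, this gives
`V_k - c_k ≤ 2 k LIN`. Against an arbitrary action the gain at `ρ_k` is at most `1 - ρ_k = ε`,
since values lie in `[0, 1]`.
-/

section LinearContract

variable {A : Type*} {V c : A → ℝ}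

lemma welfare_sub_le_of_bestResponse {ρ : ℝ} {b : A}
    (hb : ∀ a, ρ * V a - c a ≤ ρ * V b - c b) (a : A) :
    (V a - c a) - (V b - c b) ≤ (1 - ρ) * (V a - V b) := by
  linarith [hb a]

lemma welfare_sub_welfare_bestResponse_le {br : ℝ → A} (hV : ∀ a, V a ∈ Set.Icc (0 : ℝ) 1)
    (hbr : ∀ ρ a, ρ * V a - c a ≤ ρ * V (br ρ) - c (br ρ)) {e : ℝ} (he : 0 ≤ e) (a : A) :
    (V a - c a) - (V (br (1 - e)) - c (br (1 - e))) ≤ e := by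
  have hgain := welfare_sub_le_of_bestResponse (hbr (1 - e)) a
  have hdiff : V a - V (br (1 - e)) ≤ 1 := by linarith [(hV a).2, (hV (br (1 - e))).1]
  calc _ ≤ (1 - (1 - e)) * (V a - V (br (1 - e))) := hgain
    _ = e * (V a - V (br (1 - e))) := by ring
    _ ≤ e := mul_le_of_le_one_right he hdiff

lemma welfare_bestResponse_le_of_halve_gap {br : ℝ → A} (hV : ∀ a, 0 ≤ V a)
    (hbr : ∀ ρ a, ρ * V a - c a ≤ ρ * V (br ρ) - c (br ρ))
    {LIN : ℝ} (hLIN : ∀ ρ ∈ Set.Icc (0 : ℝ) 1, (1 - ρ) * V (br ρ) ≤ LIN)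
    {e : ℝ} (he₀ : 0 ≤ e) (he₁ : e ≤ 1) :
    V (br (1 - e)) - c (br (1 - e)) ≤ V (br (1 - 2 * e)) - c (br (1 - 2 * e)) + 2 * LIN := by
  have hgain := welfare_sub_le_of_bestResponse (hbr (1 - 2 * e)) (br (1 - e))
  have hlin := hLIN (1 - e) ⟨by linarith, by linarith⟩
  have hnonneg : 0 ≤ e * V (br (1 - 2 * e)) := mul_nonneg he₀ (hV _)
  linarith

lemma welfare_bestResponse_le_two_mul_lin {br : ℝ → A} (hV : ∀ a, 0 ≤ V a) (hc : ∀ a, 0 ≤ c a)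
    (hbr : ∀ ρ a, ρ * V a - c a ≤ ρ * V (br ρ) - c (br ρ))
    {LIN : ℝ} (hLIN : ∀ ρ ∈ Set.Icc (0 : ℝ) 1, (1 - ρ) * V (br ρ) ≤ LIN) (n : ℕ) :
    V (br (1 - (2 ^ (n + 1))⁻¹)) - c (br (1 - (2 ^ (n + 1))⁻¹)) ≤ 2 * (n + 1 : ℕ) * LIN := by
  induction n with
  | zero =>
    have hlin := hLIN (1 - 2⁻¹) ⟨by norm_num, by norm_num⟩
    norm_num at hlin ⊢
    linarith [hc (br 2⁻¹)]
  | succ n ih =>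
    have hhalf : 2 * (2 ^ (n + 2) : ℝ)⁻¹ = (2 ^ (n + 1))⁻¹ := by
      rw [pow_succ]; field_simp
    have hstep := welfare_bestResponse_le_of_halve_gap hV hbr hLIN
      (e := (2 ^ (n + 2))⁻¹) (by positivity) (inv_le_one_of_one_le₀ (one_le_pow₀ one_le_two))
    rw [hhalf] at hstep
    push_cast at ih ⊢
    linarith

end LinearContract

/-- Mixed approximation for linear contracts. With `k = log₂(1/ε)` and
linear-contract ratios `ρ i = 1 − 2^{−i}`, the best-responding actions satisfy
`V_k − c_k ≤ 2 k · LIN`, the welfare loss versus the welfare-optimal action is at most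
`2ε`, and consequently `OPT ≤ 2(k · LIN + ε)`. -/
theorem linear_contract_mixed_approximation {A : Type*} (ε : ℝ)
    (hε : ε ∈ Set.Ioo (0 : ℝ) (1 / 2))
    (k : ℕ) (hk : (1 : ℝ) / 2 ^ k = ε)
    (V c : A → ℝ)
    (hV : ∀ a, V a ∈ Set.Icc (0 : ℝ) 1) (hc : ∀ a, c a ∈ Set.Icc (0 : ℝ) 1)
    (br : ℝ → A)
    -- br ρ is the agent's best response to the ρ-linear contract
    (hbr : ∀ ρ : ℝ, ∀ a : A, ρ * V a - c a ≤ ρ * V (br ρ) - c (br ρ))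
    (LIN : ℝ)
    -- LIN upper-bounds the principal's utility of every linear contract
    (hLIN : ∀ ρ ∈ Set.Icc (0 : ℝ) 1, (1 - ρ) * V (br ρ) ≤ LIN)
    (OPT : ℝ) (hOPT : ∃ a, OPT ≤ V a - c a) :
    (V (br (1 - 2 ^ (-(k : ℤ)))) - c (br (1 - 2 ^ (-(k : ℤ))))
        ≤ 2 * (k : ℝ) * LIN) ∧
    (∀ a : A, (V a - c a)
        - (V (br (1 - 2 ^ (-(k : ℤ)))) - c (br (1 - 2 ^ (-(k : ℤ))))) ≤ 2 * ε) ∧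
    OPT ≤ 2 * ((k : ℝ) * LIN + ε) := by
  obtain ⟨hε₀, hε₁⟩ := hε
  rw [← hk, one_div] at hε₁
  obtain ⟨m, rfl⟩ : ∃ m, k = m + 1 :=
    Nat.exists_eq_succ_of_ne_zero (by rintro rfl; norm_num at hε₁)
  have hgap : (2 : ℝ) ^ (-((m + 1 : ℕ) : ℤ)) = ε := by rw [zpow_neg, zpow_natCast, ← hk, one_div]
  have hwelfare := welfare_bestResponse_le_two_mul_lin (fun a ↦ (hV a).1) (fun a ↦ (hc a).1) hbr
    hLIN m
  rw [← one_div, hk] at hwelfare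
  have hloss : ∀ a, (V a - c a) - (V (br (1 - ε)) - c (br (1 - ε))) ≤ 2 * ε := fun a ↦
    (welfare_sub_welfare_bestResponse_le hV hbr hε₀.le a).trans (by linarith)
  rw [hgap]
  refine ⟨hwelfare, hloss, ?_⟩
  obtain ⟨a, ha⟩ := hOPT
  linarith [hloss a]
end

section
/- Telescoping step for linear contracts: Suppose for ratios ρ_i = 1 − 2^{−i}, i = 1,...,k, and actions a_i (best response to ρ_i-linear contract) with values V_i = V_{a_i} and costs c_i, the IC constraints ρ_i V_{i+1} − c_{i+1} ≤ ρ_i V_i − c_i hold for all i = 1,...,k−1, and c_1 ≥ 0, V_i ∈ [0,1]. Then V_k − c_k ≤ 2 Σ_{i=1}^{k} (1−ρ_i)V_i. -/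
/-!
With `ρ i = 1 - 2⁻ⁱ` the IC constraint between consecutive ratios, together with `V i ≥ 0`, bounds the
increment `(V (i+1) - c (i+1)) - (V i - c i)` by `(1 - ρ i) V (i+1) = 2 (1 - ρ (i+1)) V (i+1)`, since the
weights `1 - ρ i` halve at each step. Summing the increments, and starting from
`V 1 - c 1 ≤ V 1 = 2 (1 - ρ 1) V 1`, gives the claim.
-/

theorem le_sum_Icc_of_sub_le {α : Type*} [AddCommGroup α] [PartialOrder α] [IsOrderedAddMonoid α]
    (f g : ℕ → α) {k : ℕ} (hk : 1 ≤ k) (h_one : f 1 ≤ g 1)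
    (h_step : ∀ i, 1 ≤ i → i < k → f (i + 1) - f i ≤ g (i + 1)) :
    f k ≤ ∑ i ∈ Finset.Icc 1 k, g i := by
  induction k, hk using Nat.le_induction with
  | base => simpa using h_one
  | succ n hn ih =>
    rw [Finset.sum_Icc_succ_top (by omega)]
    have h_prev := ih fun i hi hin => h_step i hi (by omega)
    have h_last := h_step n hn (by omega)
    calc f (n + 1) = f n + (f (n + 1) - f n) := by abel
      _ ≤ _ := add_le_add h_prev h_last

theorem sub_sub_sub_le_of_mul_sub_le {ρ v v' e e' : ℝ} (hρ : ρ ≤ 1) (hv : 0 ≤ v)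
    (hIC : ρ * v' - e' ≤ ρ * v - e) :
    (v' - e') - (v - e) ≤ (1 - ρ) * v' := by
  nlinarith [mul_nonneg (sub_nonneg.2 hρ) hv]

theorem two_mul_two_zpow_neg_succ (i : ℕ) :
    (2 : ℝ) * 2 ^ (-((i + 1 : ℕ) : ℤ)) = 2 ^ (-(i : ℤ)) := by
  rw [Nat.cast_succ, neg_add, zpow_add₀ two_ne_zero, mul_comm, mul_assoc]
  norm_num

/-- Telescoping step for linear contracts. With ratios
`ρ i = 1 − 2^{−i}` and IC constraints `ρ i · V (i+1) − c (i+1) ≤ ρ i · V i − c i`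
for `i = 1,…,k−1`, together with `c 1 ≥ 0` and `V i ∈ [0,1]`, we get
`V k − c k ≤ 2 ∑_{i=1}^{k} (1 − ρ i) V i`. -/
theorem linear_contract_telescoping (k : ℕ) (hk : 1 ≤ k)
    (V c : ℕ → ℝ)
    (hIC : ∀ i : ℕ, 1 ≤ i → i < k →
      (1 - 2 ^ (-(i : ℤ))) * V (i + 1) - c (i + 1)
        ≤ (1 - 2 ^ (-(i : ℤ))) * V i - c i)
    (hc1 : 0 ≤ c 1)
    (hV : ∀ i : ℕ, 1 ≤ i → i ≤ k → V i ∈ Set.Icc (0 : ℝ) 1) :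
    V k - c k ≤ 2 * ∑ i ∈ Finset.Icc 1 k, (1 - (1 - 2 ^ (-(i : ℤ)))) * V i := by
  simp only [sub_sub_cancel, Finset.mul_sum, ← mul_assoc]
  refine le_sum_Icc_of_sub_le (fun i => V i - c i) _ hk ?_ fun i hi hik => ?_
  · norm_num
    linarith
  · rw [two_mul_two_zpow_neg_succ, ← sub_sub_cancel 1 (2 ^ (-(i : ℤ)) : ℝ)]
    exact sub_sub_sub_le_of_mul_sub_le (by simp) (hV i hi hik.le).1 (hIC i hi hik)
end

section
/- Robustification lemma (core inequality chain): Let instances I and Ĩ share outcomes Ω and values v_ω ∈ [0,1]. Let p̃* be an H-bounded contract for Ĩ incentivizing action ã* with cost c̃ and distribution D̃, and let p be its robustified version p_ω = p̃*_ω + (ε/2)(v_ω − p̃*_ω) for ε ∈ (0, 1/2). Suppose in I the agent's best response to p is action a with cost c_a and distribution D_a, and there exist mixed actions σ (in I) and σ̃ (in Ĩ) such that: |c̃ − c_σ| ≤ ε²/16, |c̃_{σ̃} − c_a| ≤ ε²/16, and all four expectation-transfer inequalities hold: |E_{D̃} p̃* − E_{D_σ} p̃*| ≤ ε²/16, |E_{D̃_{σ̃}}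 p̃* − E_{D_a} p̃*| ≤ ε²/16, |E_{D_σ}(v − p̃*) − E_{D̃}(v − p̃*)| ≤ ε²/16, and IC holds in both instances (E_{D_a} p − c_a ≥ E_{D_σ} p − c_σ and E_{D̃} p̃* − c̃ ≥ E_{D̃_{σ̃}} p̃* − c̃_{σ̃}). Then E_{ω∼D_a}(v_ω − p_ω) ≥ (1 − ε/2)(E_{ω∼D̃}(v_ω − p̃*_ω) − ε/2 − ε²/16) ≥ E_{ω∼D̃}(v_ω − p̃*_ω) − ε, using that E_{ω∼D̃}(v_ω − p̃*_ω) ≤ 1. -/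
set_option maxHeartbeats 1000000 in
/-- Core inequality chain of the robustification lemma. With `q = p̃*`
an `H`-bounded contract, `p` its robustified version, best-response action with
distribution `Da` and cost `ca` in instance `I`, incentivized action with
distribution `Dt` and cost `ct` in instance `Ĩ`, and mixed actions `σ` (in `I`) and
`σ̃` (in `Ĩ`) approximating them, the principal's expected utility of `p` on `Da`
is at least `(1 − ε/2)(E_{Dt}(v − q) − ε/2 − ε²/16) ≥ E_{Dt}(v − q) − ε`. -/
theorem robustification_core (m : ℕ) (ε H : ℝ)
    (hε : ε ∈ Set.Ioo (0 : ℝ) (1 / 2)) (hH : 1 ≤ H)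
    (v q p : Fin m → ℝ)
    (hv : ∀ ω, v ω ∈ Set.Icc (0 : ℝ) 1)
    (hq : ∀ ω, q ω ∈ Set.Icc (0 : ℝ) H)
    (hp : ∀ ω, p ω = q ω + ε / 2 * (v ω - q ω))
    (Da Dt Dσ Dtσ : Fin m → ℝ)
    (hDa : (∀ ω, 0 ≤ Da ω) ∧ ∑ ω, Da ω = 1)
    (hDt : (∀ ω, 0 ≤ Dt ω) ∧ ∑ ω, Dt ω = 1)
    (hDσ : (∀ ω, 0 ≤ Dσ ω) ∧ ∑ ω, Dσ ω = 1)
    (hDtσ : (∀ ω, 0 ≤ Dtσ ω) ∧ ∑ ω, Dtσ ω = 1)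
    (ca ct cσ ctσ : ℝ)
    -- cost closeness of the approximating mixed actions
    (hcost₁ : |ct - cσ| ≤ ε ^ 2 / 16)
    (hcost₂ : |ctσ - ca| ≤ ε ^ 2 / 16)
    -- expectation-transfer inequalities
    (htr₁ : |(∑ ω, Dt ω * q ω) - ∑ ω, Dσ ω * q ω| ≤ ε ^ 2 / 16)
    (htr₂ : |(∑ ω, Dtσ ω * q ω) - ∑ ω, Da ω * q ω| ≤ ε ^ 2 / 16)
    (htr₃ : |(∑ ω, Dσ ω * (v ω - q ω)) - ∑ ω, Dt ω * (v ω - q ω)| ≤ ε ^ 2 / 16)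
    -- incentive compatibility in both instances
    (hIC : (∑ ω, Dσ ω * p ω) - cσ ≤ (∑ ω, Da ω * p ω) - ca)
    (hICt : (∑ ω, Dtσ ω * q ω) - ctσ ≤ (∑ ω, Dt ω * q ω) - ct) :
    ((1 - ε / 2) * ((∑ ω, Dt ω * (v ω - q ω)) - ε / 2 - ε ^ 2 / 16)
        ≤ ∑ ω, Da ω * (v ω - p ω)) ∧
    ((∑ ω, Dt ω * (v ω - q ω)) - ε ≤ ∑ ω, Da ω * (v ω - p ω)) := by

  obtain ⟨hε0, hε2⟩ := hε
  have hsplit : ∀ D : Fin m → ℝ,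
      ∑ ω, D ω * p ω = (∑ ω, D ω * q ω) + ε / 2 * ∑ ω, D ω * (v ω - q ω) := by
    intro D
    rw [Finset.mul_sum, ← Finset.sum_add_distrib]
    apply Finset.sum_congr rfl
    intro ω _
    rw [hp ω]; ring
  have hvp : ∀ D : Fin m → ℝ,
      ∑ ω, D ω * (v ω - p ω) = (1 - ε / 2) * ∑ ω, D ω * (v ω - q ω) := by
    intro D
    rw [Finset.mul_sum]
    apply Finset.sum_congr rfl
    intro ω _
    rw [hp ω]; ring
  rw [hsplit Da, hsplit Dσ] at hIC
  rw [hvp Da]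
  set U := ∑ ω, Dt ω * (v ω - q ω) with hUdef
  set A := ∑ ω, Da ω * (v ω - q ω) with hAdef
  -- U ≤ 1
  have hU1 : U ≤ 1 := by
    rw [hUdef]
    calc ∑ ω, Dt ω * (v ω - q ω) ≤ ∑ ω, Dt ω := by
          apply Finset.sum_le_sum
          intro ω _
          have hv' := hv ω
          have hq' := hq ω
          nlinarith [hDt.1 ω, hv'.2, hq'.1]
      _ = 1 := hDt.2
  have h1 := abs_le.mp hcost₁
  have h2 := abs_le.mp hcost₂
  have h3 := abs_le.mp htr₁
  have h4 := abs_le.mp htr₂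
  have h5 := abs_le.mp htr₃
  -- key: A ≥ U - ε/2 - ε²/16
  have hS : U - ε ^ 2 / 16 ≤ ∑ ω, Dσ ω * (v ω - q ω) := by linarith [h5.1]
  have hmul : ε / 2 * (U - ε ^ 2 / 16) ≤ ε / 2 * ∑ ω, Dσ ω * (v ω - q ω) :=
    mul_le_mul_of_nonneg_left hS (by linarith)
  have hmul' : ε / 2 * U - ε ^ 3 / 32 ≤ ε / 2 * ∑ ω, Dσ ω * (v ω - q ω) := by
    nlinarith [hmul]
  have h6pre : ε / 2 * U - ε ^ 3 / 32 - ε ^ 2 / 4 ≤ ε / 2 * A := by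
    linarith [hIC, hICt, h1.2, h2.1, h3.2, h4.1, hmul']
  have h6 : ε / 2 * (U - ε ^ 2 / 16 - ε / 2) ≤ ε / 2 * A := by
    nlinarith [h6pre]
  have hkey : U - ε ^ 2 / 16 - ε / 2 ≤ A :=
    le_of_mul_le_mul_left h6 (by linarith)
  have hpos : (0:ℝ) < 1 - ε / 2 := by linarith
  have hpart1 : (1 - ε / 2) * (U - ε / 2 - ε ^ 2 / 16) ≤ (1 - ε / 2) * A :=
    mul_le_mul_of_nonneg_left (by linarith) (by linarith)
  refine ⟨hpart1, ?_⟩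
  have hbridge : U - ε ≤ (1 - ε / 2) * (U - ε / 2 - ε ^ 2 / 16) := by
    nlinarith [mul_nonneg hε0.le (by linarith : (0:ℝ) ≤ 1 - U), sq_nonneg ε,
      pow_pos hε0 3]
  linarith
end
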